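/- Let A be a complete regular local ring with perfect residue field of characteristic p, A_n = A[x_1^{1/p^n},…,x_d^{1/p^n}], and M a finitely generated m_A-power-torsion A_∞,0^{nc}-module with finite generating set Σ. Letting M_n = Σ·A_n ⊆ M, one has λ_∞(M) = lim_{n→∞} (1/p^{nd})·length_A(M_n). -/

import Mathlib

universe u

open IsLocalRing


/-- The length of an `R`-module `M`, valued in `ℝ≥0∞`: the supremum of the lengths of chains
of submodules of `M`. -/
noncomputable def moduleLength (R M : Type*) [Semiring R] [AddCommGroup M] [Module R M] :
    ENNReal :=
  ⨆ s : LTSeries (Submodule R M), (s.length : ENNReal)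

/-- The `n`-th level `A_n = A[x_1^{1/pⁿ}, …, x_d^{1/pⁿ}]` of the tower whose union is
`A_∞,0^{nc}`, realized as the subalgebra of `B` generated by the chosen compatible
`pⁿ`-th roots `ξ i n` of the regular system of parameters. -/
noncomputable def rootLevel (A B : Type u) [CommRing A] [CommRing B] [Algebra A B]
    {d : ℕ} (ξ : Fin d → ℕ → B) (n : ℕ) : Subalgebra A B :=
  Algebra.adjoin A (Set.range fun i => ξ i n)

/-- For a `B`-module `M` and a set `S ⊆ M` of generators, the `A`-submodule `S·A_n`
generated by all `A_n`-multiples of elements of `S`. -/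
noncomputable def levelSpan (A B : Type u) [CommRing A] [CommRing B] [Algebra A B]
    {d : ℕ} (ξ : Fin d → ℕ → B) (n : ℕ) (M : Type u) [AddCommGroup M] [Module A M]
    [Module B M] (S : Set M) : Submodule A M :=
  Submodule.span A {y : M | ∃ b ∈ rootLevel A B ξ n, ∃ s ∈ S, y = b • s}

/-- **Faltings' normalized length** of an `A_∞,0^{nc}`-module `M` (where
`B = A_∞,0^{nc} = ∪ₙ Aₙ`): the supremum, over finitely generated `B`-submodules `N` of `M`,
of the infimum over finite generating sets `S` of `N` and levels `n` of
`length_A(S·A_n)/p^{nd}`. -/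
noncomputable def normalizedLength (A B : Type u) [CommRing A] [CommRing B] [Algebra A B]
    (p : ℕ) {d : ℕ} (ξ : Fin d → ℕ → B) (M : Type u) [AddCommGroup M] [Module A M]
    [Module B M] : ENNReal :=
  ⨆ (N : Submodule B M) (_ : N.FG),
    ⨅ (S : Finset M) (_ : Submodule.span B (S : Set M) = N) (n : ℕ),
      moduleLength A ↥(levelSpan A B ξ n M (S : Set M)) / (p : ENNReal) ^ (n * d)

/-!
Since `ξ i n = ξ i (n + 1) ^ p`, the algebra `A_{n+1}` is generated as an `A_n`-module by the
`p ^ d` monomials `∏ i, ξ i (n + 1) ^ e i` with all `e i < p`. Hence `Σ·A_{n+1}` is an `A`-linear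
image of `p ^ d` copies of `Σ·A_n`, so `length_A(Σ·A_n) / p^{nd}` is non-increasing and converges
to its infimum. This infimum does not depend on the finite generating set: every finite subset
of `M = ⋃ₙ Σ·A_n` lies in some `Σ·A_k`, so `S·A_m ⊆ Σ·A_m` for all `m ≥ k`. The same comparison
bounds the term of every finitely generated submodule in the supremum defining `λ_∞`, which is
therefore attained at `M` itself.
-/

open scoped ENNReal

theorem moduleLength_eq_length (R M : Type*) [Ring R] [AddCommGroup M] [Module R M] :
    moduleLength R M = Module.length R M := by
  have h := Module.coe_length R M
  rw [Order.krullDim_eq_iSup_length, WithBot.coe_inj] at h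
  simp only [moduleLength, h, ENat.toENNReal_iSup, ENat.toENNReal_coe]

section Length

variable {R M N : Type*} [Ring R] [AddCommGroup M] [Module R M] [AddCommGroup N] [Module R N]

theorem Module.length_submodule_mono {P Q : Submodule R M} (h : P ≤ Q) :
    Module.length R P ≤ Module.length R Q :=
  Module.length_le_of_injective (Submodule.inclusion h) (Submodule.inclusion_injective h)

theorem Module.length_range_le (f : M →ₗ[R] N) :
    Module.length R (LinearMap.range f) ≤ Module.length R M :=
  Module.length_le_of_surjective f.rangeRestrict f.surjective_rangeRestrict

end Length

section Levels

variable {A B : Type u} [CommRing A] [CommRing B] [Algebra A B] {d : ℕ} {ξ : Fin d → ℕ → B}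
  {M : Type u} [AddCommGroup M] [Module A M] [Module B M] {p : ℕ}

theorem self_mem_rootLevel (i : Fin d) (n : ℕ) : ξ i n ∈ rootLevel A B ξ n :=
  Algebra.subset_adjoin ⟨i, rfl⟩

theorem rootLevel_mono (hξ : ∀ i n, ξ i (n + 1) ^ p = ξ i n) : Monotone (rootLevel A B ξ) := by
  refine monotone_nat_of_le_succ fun n => Algebra.adjoin_le ?_
  rintro _ ⟨i, rfl⟩
  show ξ i n ∈ rootLevel A B ξ (n + 1)
  exact hξ i n ▸ pow_mem (self_mem_rootLevel i (n + 1)) p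

theorem levelSpan_mono (hξ : ∀ i n, ξ i (n + 1) ^ p = ξ i n) {m n : ℕ} (h : m ≤ n) (S : Set M) :
    levelSpan A B ξ m M S ≤ levelSpan A B ξ n M S := by
  refine Submodule.span_mono ?_
  rintro _ ⟨b, hb, s, hs, rfl⟩
  exact ⟨b, rootLevel_mono hξ h hb, s, hs, rfl⟩

theorem subset_levelSpan (n : ℕ) (S : Set M) : S ⊆ levelSpan A B ξ n M S :=
  fun s hs => Submodule.subset_span ⟨1, one_mem _, s, hs, (one_smul B s).symm⟩

variable [IsScalarTower A B M]

theorem smul_mem_levelSpan {n : ℕ} {b : B} (hb : b ∈ rootLevel A B ξ n) {S : Set M} {y : M}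
    (hy : y ∈ levelSpan A B ξ n M S) : b • y ∈ levelSpan A B ξ n M S := by
  induction hy using Submodule.span_induction with
  | mem _ hy =>
    obtain ⟨c, hc, s, hs, rfl⟩ := hy
    rw [smul_smul]
    exact Submodule.subset_span ⟨b * c, mul_mem hb hc, s, hs, rfl⟩
  | zero => simp
  | add y z _ _ hy hz => simpa only [smul_add] using add_mem hy hz
  | smul a y _ hy => simpa only [smul_comm b a y] using Submodule.smul_mem _ a hy

theorem levelSpan_le_of_subset {n : ℕ} {S T : Set M} (h : S ⊆ levelSpan A B ξ n M T) :
    levelSpan A B ξ n M S ≤ levelSpan A B ξ n M T := by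
  refine Submodule.span_le.mpr ?_
  rintro _ ⟨b, hb, s, hs, rfl⟩
  exact smul_mem_levelSpan hb (h hs)

variable (hξ : ∀ i n, ξ i (n + 1) ^ p = ξ i n) (hunion : ∀ b : B, ∃ n, b ∈ rootLevel A B ξ n)
include hξ hunion

theorem exists_mem_levelSpan_of_mem_span {T : Set M} {y : M} (hy : y ∈ Submodule.span B T) :
    ∃ n, y ∈ levelSpan A B ξ n M T := by
  induction hy using Submodule.span_induction with
  | mem y hy => exact ⟨0, subset_levelSpan 0 T hy⟩
  | zero => exact ⟨0, zero_mem _⟩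
  | add y z _ _ hy hz =>
    obtain ⟨m, hy⟩ := hy
    obtain ⟨n, hz⟩ := hz
    exact ⟨max m n, add_mem (levelSpan_mono hξ (le_max_left m n) T hy)
      (levelSpan_mono hξ (le_max_right m n) T hz)⟩
  | smul b y _ hy =>
    obtain ⟨m, hy⟩ := hy
    obtain ⟨n, hb⟩ := hunion b
    exact ⟨max m n, smul_mem_levelSpan (rootLevel_mono hξ (le_max_right m n) hb)
      (levelSpan_mono hξ (le_max_left m n) T hy)⟩

theorem exists_subset_levelSpan (S : Finset M) {T : Set M}
    (hS : (S : Set M) ⊆ Submodule.span B T) :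
    ∃ n, (S : Set M) ⊆ levelSpan A B ξ n M T := by
  choose! level hlevel using fun s (hs : s ∈ S) =>
    exists_mem_levelSpan_of_mem_span hξ hunion (hS hs)
  exact ⟨S.sup level, fun s hs => levelSpan_mono hξ (Finset.le_sup hs) T (hlevel s hs)⟩

end Levels

theorem pow_succ_level_eq {B : Type*} [Monoid B] {d p : ℕ} {ξ : Fin d → ℕ → B}
    (hξ : ∀ i n, ξ i (n + 1) ^ p = ξ i n) (i : Fin d) (n k : ℕ) :
    ξ i (n + 1) ^ k = ξ i n ^ (k / p) * ξ i (n + 1) ^ (k % p) := by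
  conv_lhs => rw [← Nat.div_add_mod k p, pow_add, pow_mul, hξ]

section Step

variable {A B : Type u} [CommRing A] [CommRing B] [Algebra A B] {d : ℕ} {ξ : Fin d → ℕ → B}
  {p : ℕ} (hξ : ∀ i n, ξ i (n + 1) ^ p = ξ i n)
include hξ

theorem rootLevel_succ_le_span_monomials [NeZero p] (n : ℕ) :
    Subalgebra.toSubmodule (rootLevel A B ξ (n + 1)) ≤
      (Submodule.span (rootLevel A B ξ n)
        (Set.range fun e : Fin d → Fin p => ∏ i, ξ i (n + 1) ^ (e i : ℕ))).restrictScalars A := by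
  rw [rootLevel, Algebra.adjoin_eq_span, Submodule.span_le]
  intro _ hy
  obtain ⟨k, rfl⟩ := Submonoid.exists_of_mem_closure_range _ _ hy
  have hsplit : ∏ i, ξ i (n + 1) ^ k i =
      (∏ i, ξ i n ^ (k i / p)) * ∏ i, ξ i (n + 1) ^ (k i % p) := by
    rw [← Finset.prod_mul_distrib]
    exact Finset.prod_congr rfl fun i _ => pow_succ_level_eq hξ i n (k i)
  rw [hsplit]
  have hc : ∏ i, ξ i n ^ (k i / p) ∈ rootLevel A B ξ n :=
    prod_mem fun i _ => pow_mem (self_mem_rootLevel i n) _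
  exact Submodule.smul_mem _ (⟨_, hc⟩ : rootLevel A B ξ n)
    (Submodule.subset_span ⟨fun i => ⟨k i % p, Nat.mod_lt _ (NeZero.pos p)⟩, rfl⟩)

variable {M : Type u} [AddCommGroup M] [Module A M] [Module B M] [IsScalarTower A B M]

theorem length_levelSpan_succ_le [NeZero p] (n : ℕ) (S : Set M) :
    Module.length A (levelSpan A B ξ (n + 1) M S) ≤
      p ^ d * Module.length A (levelSpan A B ξ n M S) := by
  set L := levelSpan A B ξ n M S
  let Φ : ((Fin d → Fin p) → L) →ₗ[A] M := LinearMap.lsum A (fun _ => L) A fun e =>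
    DistribSMul.toLinearMap A M (∏ i, ξ i (n + 1) ^ (e i : ℕ)) ∘ₗ L.subtype
  have hle : levelSpan A B ξ (n + 1) M S ≤ LinearMap.range Φ := by
    refine Submodule.span_le.mpr ?_
    rintro _ ⟨b, hb, s, hs, rfl⟩
    obtain ⟨c, rfl⟩ :=
      (Submodule.mem_span_range_iff_exists_fun _).mp (rootLevel_succ_le_span_monomials hξ n hb)
    refine ⟨fun e => ⟨c e • s, smul_mem_levelSpan (c e).2 (subset_levelSpan n S hs)⟩, ?_⟩
    simp only [Φ, LinearMap.lsum_apply, LinearMap.sum_apply,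
      LinearMap.comp_apply, LinearMap.proj_apply, Submodule.subtype_apply,
      DistribSMul.toLinearMap_apply, Finset.sum_smul]
    refine Finset.sum_congr rfl fun e _ => ?_
    simp only [Subalgebra.smul_def, smul_smul, smul_eq_mul, mul_comm]
  calc _ ≤ Module.length A (LinearMap.range Φ) := Module.length_submodule_mono hle
    _ ≤ _ := Module.length_range_le Φ
    _ = _ := by simp

end Step

noncomputable def normalizedLevelLength (A B : Type u) [CommRing A] [CommRing B] [Algebra A B]
    (p : ℕ) {d : ℕ} (ξ : Fin d → ℕ → B) (M : Type u) [AddCommGroup M] [Module A M]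
    [Module B M] (S : Set M) (n : ℕ) : ℝ≥0∞ :=
  moduleLength A (levelSpan A B ξ n M S) / (p : ℝ≥0∞) ^ (n * d)

section Normalized

variable {A B : Type u} [CommRing A] [CommRing B] [Algebra A B] {d : ℕ} {ξ : Fin d → ℕ → B}
  {M : Type u} [AddCommGroup M] [Module A M] [Module B M] [IsScalarTower A B M]
  {p : ℕ} (hξ : ∀ i n, ξ i (n + 1) ^ p = ξ i n)
include hξ

theorem normalizedLevelLength_antitone [NeZero p] (S : Set M) :
    Antitone (normalizedLevelLength A B p ξ M S) := by
  refine antitone_nat_of_succ_le fun n => ?_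
  have hpd : (p : ℝ≥0∞) ^ d ≠ 0 := pow_ne_zero _ (Nat.cast_ne_zero.mpr (NeZero.ne p))
  have hpd' : (p : ℝ≥0∞) ^ d ≠ ⊤ := ENNReal.pow_ne_top (ENNReal.natCast_ne_top p)
  have hstep : moduleLength A (levelSpan A B ξ (n + 1) M S) ≤
      (p : ℝ≥0∞) ^ d * moduleLength A (levelSpan A B ξ n M S) := by
    simpa only [moduleLength_eq_length, ENat.toENNReal_mul, ENat.toENNReal_pow,
      ENat.toENNReal_coe] using ENat.toENNReal_mono (length_levelSpan_succ_le hξ n S)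
  calc normalizedLevelLength A B p ξ M S (n + 1)
      = moduleLength A (levelSpan A B ξ (n + 1) M S) /
          ((p : ℝ≥0∞) ^ d * (p : ℝ≥0∞) ^ (n * d)) := by
        rw [normalizedLevelLength, Nat.succ_mul, pow_add, mul_comm]
    _ ≤ (p : ℝ≥0∞) ^ d * moduleLength A (levelSpan A B ξ n M S) /
          ((p : ℝ≥0∞) ^ d * (p : ℝ≥0∞) ^ (n * d)) := by gcongr
    _ = normalizedLevelLength A B p ξ M S n := ENNReal.mul_div_mul_left _ _ hpd hpd'

theorem normalizedLevelLength_le_of_subset_levelSpan {S T : Set M} {k m : ℕ}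
    (h : S ⊆ levelSpan A B ξ k M T) (hkm : k ≤ m) :
    normalizedLevelLength A B p ξ M S m ≤ normalizedLevelLength A B p ξ M T m := by
  refine ENNReal.div_le_div_right ?_ _
  rw [moduleLength_eq_length, moduleLength_eq_length, ENat.toENNReal_le]
  exact Module.length_submodule_mono (levelSpan_le_of_subset (h.trans (levelSpan_mono hξ hkm T)))

variable [NeZero p] (hunion : ∀ b : B, ∃ n, b ∈ rootLevel A B ξ n)
include hunion

theorem iInf_normalizedLevelLength_le {S : Finset M} {T : Set M}
    (hS : (S : Set M) ⊆ Submodule.span B T) :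
    ⨅ n, normalizedLevelLength A B p ξ M S n ≤ ⨅ n, normalizedLevelLength A B p ξ M T n := by
  obtain ⟨k, hk⟩ := exists_subset_levelSpan hξ hunion S hS
  refine le_iInf fun n => iInf_le_of_le (max k n) ?_
  calc normalizedLevelLength A B p ξ M S (max k n)
      ≤ normalizedLevelLength A B p ξ M T (max k n) :=
        normalizedLevelLength_le_of_subset_levelSpan hξ hk (le_max_left k n)
    _ ≤ normalizedLevelLength A B p ξ M T n :=
        normalizedLevelLength_antitone hξ T (le_max_right k n)

theorem normalizedLength_eq_iInf {Sg : Finset M} (hSg : Submodule.span B (Sg : Set M) = ⊤) :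
    normalizedLength A B p ξ M = ⨅ n, normalizedLevelLength A B p ξ M Sg n := by
  refine le_antisymm (iSup₂_le fun N hN => ?_) ?_
  · obtain ⟨S, rfl⟩ := hN
    refine iInf₂_le_of_le S rfl (iInf_normalizedLevelLength_le hξ hunion ?_)
    simp [hSg]
  · refine le_iSup₂_of_le ⊤ ⟨Sg, hSg⟩ (le_iInf₂ fun S hS => ?_)
    refine iInf_normalizedLevelLength_le hξ hunion ?_
    simp [hS]

end Normalized

theorem normalizedLength_eq_lim_of_fg_general
    (A B : Type u) [CommRing A] (p : ℕ) [Fact p.Prime] [CommRing B] [Algebra A B]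
    (d : ℕ) (ξ : Fin d → ℕ → B) (hξ : ∀ i n, ξ i (n + 1) ^ p = ξ i n)
    (hunion : ∀ b : B, ∃ n, b ∈ rootLevel A B ξ n)
    (M : Type u) [AddCommGroup M] [Module A M] [Module B M] [IsScalarTower A B M]
    (Sg : Finset M) (hSg : Submodule.span B (Sg : Set M) = ⊤) :
    Filter.Tendsto
      (fun n : ℕ =>
        moduleLength A ↥(levelSpan A B ξ n M (Sg : Set M)) / (p : ENNReal) ^ (n * d))
      Filter.atTop (nhds (normalizedLength A B p ξ M)) := by
  rw [normalizedLength_eq_iInf hξ hunion hSg]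
  exact tendsto_atTop_iInf (normalizedLevelLength_antitone hξ (Sg : Set M))

/-- Let `A` be a complete regular local ring with perfect residue field of characteristic
`p`, `Aₙ = A[x₁^{1/pⁿ}, …, x_d^{1/pⁿ}]`, and `M` a finitely generated `m_A`-power-torsion
`A_∞,0^{nc}`-module with finite generating set `Σ`.  Letting `Mₙ = Σ·Aₙ ⊆ M`, one has
`λ_∞(M) = lim_{n→∞} (1/p^{nd})·length_A(Mₙ)`. -/
theorem normalizedLength_eq_lim_of_fg
    (A B : Type u) [CommRing A] [IsNoetherianRing A] [IsLocalRing A]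
    [IsAdicComplete (maximalIdeal A) A] (p : ℕ) [Fact p.Prime]
    [CharP (ResidueField A) p] [ExpChar (ResidueField A) p] [PerfectRing (ResidueField A) p]
    [CommRing B] [Algebra A B] (hinj : Function.Injective (algebraMap A B))
    (d : ℕ) (hdim : ringKrullDim A = d) (x : Fin d → A)
    (hx : Ideal.span (Set.range x) = maximalIdeal A)
    (ξ : Fin d → ℕ → B) (hξ0 : ∀ i, ξ i 0 = algebraMap A B (x i))
    (hξ : ∀ i n, ξ i (n + 1) ^ p = ξ i n)
    (hunion : ∀ b : B, ∃ n, b ∈ rootLevel A B ξ n)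
    (hfree : ∀ n, Module.Free A ↥(rootLevel A B ξ n) ∧
      Module.finrank A ↥(rootLevel A B ξ n) = p ^ (n * d))
    (M : Type u) [AddCommGroup M] [Module A M] [Module B M] [IsScalarTower A B M]
    (htor : ∃ k : ℕ, ∀ a ∈ maximalIdeal A ^ k, ∀ m : M, a • m = 0)
    (Sg : Finset M) (hSg : Submodule.span B (Sg : Set M) = ⊤) :
    Filter.Tendsto
      (fun n : ℕ =>
        moduleLength A ↥(levelSpan A B ξ n M (Sg : Set M)) / (p : ENNReal) ^ (n * d))
      Filter.atTop (nhds (normalizedLength A B p ξ M)) :=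
  normalizedLength_eq_lim_of_fg_general A B p d ξ hξ hunion M Sg hSg
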